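/- arXiv:1809.07510 — 3 statements merged into one kernel-verified Lean document; each statement's English description precedes it below -/
import Mathlib

section
/- Let (A, d) be a differential graded module with involution * satisfying d(a*) = (da)*. With the Leibniz differential d on A^{⊗(n+1)} and r_n(a_0 ⊗ ... ⊗ a_n) = ϱ(-1)^{Σ_{0<i<j≤n}|a_i||a_j|} a_0* ⊗ a_n* ⊗ ... ⊗ a_1*, one has d ∘ r_n = r_n ∘ d. -/
/-!
On a pure tensor `a₀ ⊗ ⋯ ⊗ aₙ` both `d ∘ r` and `r ∘ d` are sums over the position hit by `d`,
and the reflection `i ↦ -i` of `Fin (n + 1)` matches the term of `d ∘ r` at position `k` with the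
term of `r ∘ d` at position `-k`. The tensors agree because `d` commutes with `*`. For the signs,
lowering `|a_m|` (`m > 0`) by one changes `∑_{0<i<j} |a_i||a_j|` by `∑_{0<i≠m} |a_i|` mod 2, which
is exactly the difference of the two Leibniz signs. If `|a_{-k}| = 0` the signs may differ
(`0 - 1 = 0` in `ℕ`), but then both terms vanish because `d` is zero in degree `0`.
-/

/-- The tuple obtained from `a` by replacing its `i`-th entry (of degree `deg i`)
by an element `x` of degree `deg i - 1`. -/
def updTuple {A : ℕ → Type*} {m : ℕ} (deg : Fin m → ℕ) (a : ∀ i, A (deg i)) (i : Fin m)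
    (x : A (deg i - 1)) : ∀ j, A (Function.update deg i (deg i - 1) j) := fun j => by
  by_cases h : j = i
  · rw [h, Function.update_self]; exact x
  · rw [Function.update_of_ne h]; exact a j

open Function

section Exponents
variable {R : Type*} {m : ℕ}

def reflectionExponent [NonUnitalNonAssocSemiring R] (f : Fin m → R) : R :=
  ∑ j : Fin m, ∑ i : Fin m, if 0 < (i : ℕ) ∧ (i : ℕ) < (j : ℕ) then f i * f j else 0

def leibnizExponent [AddCommMonoid R] (f : Fin m → R) (k : Fin m) : R :=
  ∑ j : Fin m, if (j : ℕ) < (k : ℕ) then f j else 0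

theorem Nat.cast_reflectionExponent [NonAssocSemiring R] (f : Fin m → ℕ) :
    ((reflectionExponent f : ℕ) : R) = reflectionExponent (Nat.cast ∘ f) := by
  simp [reflectionExponent, apply_ite (Nat.cast : ℕ → R)]

theorem Nat.cast_leibnizExponent [NonAssocSemiring R] (f : Fin m → ℕ) (k : Fin m) :
    ((leibnizExponent f k : ℕ) : R) = leibnizExponent (Nat.cast ∘ f) k := by
  simp [leibnizExponent, apply_ite (Nat.cast : ℕ → R)]

theorem reflectionExponent_update [CommRing R] (f : Fin m → R) (p : Fin m) (x : R) :
    reflectionExponent (update f p x) = reflectionExponent f + (x - f p) *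
      ∑ i : Fin m, ((if 0 < (i : ℕ) ∧ (i : ℕ) < p then f i else 0) +
        if 0 < (p : ℕ) ∧ (p : ℕ) < i then f i else 0) := by
  have hterm : ∀ j i : Fin m,
      (if 0 < (i : ℕ) ∧ (i : ℕ) < j then update f p x i * update f p x j else 0) =
        (if 0 < (i : ℕ) ∧ (i : ℕ) < j then f i * f j else 0) + (x - f p) *
          ((if j = p then if 0 < (i : ℕ) ∧ (i : ℕ) < p then f i else 0 else 0) +
            if i = p then if 0 < (p : ℕ) ∧ (p : ℕ) < j then f j else 0 else 0) := by
    intro j i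
    by_cases hi : i = p <;> by_cases hj : j = p <;> subst_vars <;>
      simp only [update_self, update_of_ne, ne_eq, not_false_eq_true, *, if_true, if_false] <;>
      split_ifs <;> first | omega | ring
  simp only [reflectionExponent, hterm, Finset.sum_add_distrib, ← Finset.mul_sum, mul_add,
    Finset.sum_ite_irrel, Finset.sum_const_zero, Finset.sum_ite_eq', Finset.mem_univ, if_true]

theorem reflectionExponent_add_leibnizExponent_comp_neg [CommRing R] [CharP R 2] {n : ℕ}
    (f : Fin (n + 1) → R) (k : Fin (n + 1)) :
    reflectionExponent f + leibnizExponent (fun i => f (-i)) k =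
      leibnizExponent f (-k) + reflectionExponent (update f (-k) (f (-k) - 1)) := by
  have hneg : leibnizExponent (fun i => f (-i)) k =
      ∑ j : Fin (n + 1), if ((-j : Fin (n + 1)) : ℕ) < k then f j else 0 :=
    Fintype.sum_equiv (Equiv.neg _) _ _ fun j => by simp
  rw [reflectionExponent_update, hneg, sub_sub_cancel_left, neg_one_mul, CharTwo.neg_eq,
    add_comm (leibnizExponent f (-k)), add_assoc, leibnizExponent, ← Finset.sum_add_distrib]
  congr 1
  refine Finset.sum_congr rfl fun j _ => ?_
  have hk := k.is_lt
  have hj := j.is_lt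
  -- `(-j : ℕ) < k` iff `j = 0 < k` or `0 < -k < j`; all other terms cancel in pairs mod 2
  simp only [Fin.val_neg, Fin.ext_iff, Fin.val_zero]
  split_ifs <;> first | omega | simp [CharTwo.add_self_eq_zero]

theorem neg_one_pow_reflectionExponent_add_leibnizExponent [Monoid R] [HasDistribNeg R] {n : ℕ}
    (deg : Fin (n + 1) → ℕ) (k : Fin (n + 1)) (hk : deg (-k) ≠ 0) :
    (-1 : R) ^ (reflectionExponent deg + leibnizExponent (fun i => deg (-i)) k) =
      (-1) ^ (leibnizExponent deg (-k) + reflectionExponent (update deg (-k) (deg (-k) - 1))) := by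
  refine neg_one_pow_congr ?_
  rw [← ZMod.natCast_eq_zero_iff_even, ← ZMod.natCast_eq_zero_iff_even]
  push_cast [Nat.cast_reflectionExponent, Nat.cast_leibnizExponent, comp_update,
    Nat.cast_sub (Nat.one_le_iff_ne_zero.2 hk)]
  exact Eq.to_iff (congrArg (· = 0) (reflectionExponent_add_leibnizExponent_comp_neg _ k))

end Exponents

theorem heq_apply_of_heq {α : Type*} {A B : α → Sort*} (F : ∀ p, A p → B p) {p q : α}
    (h : p = q) {x : A p} {y : A q} (hxy : x ≍ y) : F p x ≍ F q y := by
  subst h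
  rw [eq_of_heq hxy]

theorem apply_eq_apply_of_heq {ι α β : Type*} {A : α → Type*}
    (F : ∀ deg : ι → α, (∀ i, A (deg i)) → β) {deg₁ deg₂ : ι → α} (h : deg₁ = deg₂)
    {a₁ : ∀ i, A (deg₁ i)} {a₂ : ∀ i, A (deg₂ i)} (ha : ∀ i, a₁ i ≍ a₂ i) :
    F deg₁ a₁ = F deg₂ a₂ := by
  subst h
  rw [funext fun i => eq_of_heq (ha i)]

section Tuples
variable {A : ℕ → Type*} {m : ℕ}

theorem updTuple_heq_self (deg : Fin m → ℕ) (a : ∀ i, A (deg i)) (i : Fin m)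
    (x : A (deg i - 1)) : updTuple deg a i x i ≍ x := by
  simp [updTuple]

theorem updTuple_heq_of_ne (deg : Fin m → ℕ) (a : ∀ i, A (deg i)) (i : Fin m)
    (x : A (deg i - 1)) {j : Fin m} (h : j ≠ i) : updTuple deg a i x j ≍ a j := by
  simp [updTuple, h]

theorem updTuple_self_zero [∀ p, Zero (A p)] (deg : Fin m → ℕ) (a : ∀ i, A (deg i))
    (i : Fin m) : updTuple deg a i 0 i = 0 :=
  eq_of_heq ((updTuple_heq_self deg a i 0).trans
    (congr_arg_heq (fun p => (0 : A p)) (update_self i (deg i - 1) deg).symm))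

theorem MultilinearMap.map_updTuple_zero {K M : Type*} [Semiring K] [∀ p, AddCommMonoid (A p)]
    [∀ p, Module K (A p)] [AddCommMonoid M] [Module K M] (deg : Fin m → ℕ)
    (a : ∀ i, A (deg i)) (i : Fin m)
    (f : MultilinearMap K (fun j => A (update deg i (deg i - 1) j)) M) :
    f (updTuple deg a i 0) = 0 :=
  f.map_coord_zero i (updTuple_self_zero deg a i)

theorem updTuple_comp_map_heq (d : ∀ p, A p → A (p - 1)) (φ : ∀ p, A p → A p)
    (hdφ : ∀ p x, d p (φ p x) = φ (p - 1) (d p x)) {l : ℕ} (e : Fin l → Fin m)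
    (he : Injective e) (deg : Fin m → ℕ) (a : ∀ i, A (deg i)) (k j : Fin l) :
    updTuple (fun i => deg (e i)) (fun i => φ _ (a (e i))) k (d _ (φ _ (a (e k)))) j ≍
      φ _ (updTuple deg a (e k) (d _ (a (e k))) (e j)) := by
  rcases eq_or_ne j k with rfl | hj
  · refine (updTuple_heq_self _ _ _ _).trans ?_
    rw [hdφ]
    exact heq_apply_of_heq φ (update_self (e j) _ deg).symm (updTuple_heq_self _ _ _ _).symm
  · exact (updTuple_heq_of_ne _ _ _ _ hj).trans (heq_apply_of_heq φ
      (update_of_ne (he.ne hj) _ _).symm (updTuple_heq_of_ne _ _ _ _ (he.ne hj)).symm)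

theorem apply_updTuple_comp_map {β : Type*} {l : ℕ}
    (F : ∀ deg : Fin l → ℕ, (∀ i, A (deg i)) → β)
    (d : ∀ p, A p → A (p - 1)) (φ : ∀ p, A p → A p)
    (hdφ : ∀ p x, d p (φ p x) = φ (p - 1) (d p x)) (e : Fin l → Fin m)
    (he : Injective e) (deg : Fin m → ℕ) (a : ∀ i, A (deg i)) (k : Fin l) :
    F (update (fun i => deg (e i)) k (deg (e k) - 1))
        (updTuple (fun i => deg (e i)) (fun i => φ _ (a (e i))) k (d _ (φ _ (a (e k))))) =
      F (fun i => update deg (e k) (deg (e k) - 1) (e i))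
        (fun i => φ _ (updTuple deg a (e k) (d _ (a (e k))) (e i))) :=
  apply_eq_apply_of_heq F (update_comp_eq_of_injective' deg he k _).symm
    (updTuple_comp_map_heq d φ hdφ e he deg a k)

end Tuples


theorem stmt6_general {K : Type*} [CommRing K] {A : ℕ → Type*}
    [∀ p, AddCommGroup (A p)] [∀ p, Module K (A p)]
    {M : Type*} [AddCommGroup M] [Module K M] (n : ℕ)
    (ten : ∀ deg : Fin (n + 1) → ℕ, MultilinearMap K (fun i => A (deg i)) M)
    (hspan : Submodule.span K {x : M | ∃ (deg : Fin (n + 1) → ℕ) (a : ∀ i, A (deg i)),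
      x = ten deg a} = ⊤)
    (d : ∀ p : ℕ, A p →ₗ[K] A (p - 1)) (hd0 : d 0 = 0)
    (star : ∀ p : ℕ, A p →ₗ[K] A p)
    (hdstar : ∀ p (a : A p), d p (star p a) = star (p - 1) (d p a))
    (ϱ : K)
    (r D : Module.End K M)
    (hrf : ∀ (deg : Fin (n + 1) → ℕ) (a : ∀ i, A (deg i)),
      r (ten deg a) =
        (ϱ * (-1 : K) ^ (∑ j : Fin (n + 1), ∑ i : Fin (n + 1),
            if 0 < (i : ℕ) ∧ (i : ℕ) < (j : ℕ) then deg i * deg j else 0)) •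
          ten (fun i => deg (-i)) (fun i => star (deg (-i)) (a (-i))))
    (hDf : ∀ (deg : Fin (n + 1) → ℕ) (a : ∀ i, A (deg i)),
      D (ten deg a) =
        ∑ i : Fin (n + 1),
          ((-1 : K) ^ (∑ j : Fin (n + 1), if (j : ℕ) < (i : ℕ) then deg j else 0)) •
            ten (Function.update deg i (deg i - 1))
              (updTuple deg a i (d (deg i) (a i)))) :
    D * r = r * D := by
  refine LinearMap.ext_on hspan ?_
  rintro _ ⟨deg, a, rfl⟩
  simp only [Module.End.mul_apply, hrf, hDf, map_smul, map_sum, Finset.smul_sum, smul_smul]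
  refine Fintype.sum_equiv (Equiv.neg (Fin (n + 1))) _ _ fun k => ?_
  rw [Equiv.neg_apply, ← apply_updTuple_comp_map (fun deg t => ten deg t) (fun p => d p) (fun p => star p) hdstar
    (fun i => -i) neg_injective deg a k]
  rcases eq_or_ne (deg (-k)) 0 with h0 | h0
  · have hz := (ten (update (fun i => deg (-i)) k (deg (-k) - 1))).map_updTuple_zero
      (fun i => deg (-i)) (fun i => star _ (a (-i))) k
    rw [show d (deg (-k)) = 0 from h0 ▸ hd0, LinearMap.zero_apply, hz, smul_zero, smul_zero]
  · congr 1
    have hsign := neg_one_pow_reflectionExponent_add_leibnizExponent (R := K) deg k h0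
    simp only [reflectionExponent, leibnizExponent, pow_add] at hsign
    linear_combination ϱ * hsign

/-- For a differential graded module `(A, d)` with an involution `*`
commuting with `d`, the graded Leibniz differential and the reflection
`r_n(a₀ ⊗ ⋯ ⊗ a_n) = ϱ (-1)^{∑_{0<i<j≤n}|a_i||a_j|} a₀* ⊗ a_n* ⊗ ⋯ ⊗ a₁*` on
`A^{⊗(n+1)}` commute: `d ∘ r_n = r_n ∘ d`.  Here `M` plays the role of `A^{⊗(n+1)}`
and `ten deg` the pure-tensor multilinear map. -/
theorem stmt6 {K : Type*} [CommRing K] {A : ℕ → Type*}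
    [∀ p, AddCommGroup (A p)] [∀ p, Module K (A p)]
    {M : Type*} [AddCommGroup M] [Module K M] (n : ℕ)
    (ten : ∀ deg : Fin (n + 1) → ℕ, MultilinearMap K (fun i => A (deg i)) M)
    (hspan : Submodule.span K {x : M | ∃ (deg : Fin (n + 1) → ℕ) (a : ∀ i, A (deg i)),
      x = ten deg a} = ⊤)
    (d : ∀ p : ℕ, A p →ₗ[K] A (p - 1)) (hd0 : d 0 = 0)
    (hdd : ∀ p (a : A p), d (p - 1) (d p a) = 0)
    (star : ∀ p : ℕ, A p →ₗ[K] A p)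
    (hstar2 : ∀ p (a : A p), star p (star p a) = a)
    (hdstar : ∀ p (a : A p), d p (star p a) = star (p - 1) (d p a))
    (ϱ : K) (hϱ : ϱ = 1 ∨ ϱ = -1)
    (r D : Module.End K M)
    (hrf : ∀ (deg : Fin (n + 1) → ℕ) (a : ∀ i, A (deg i)),
      r (ten deg a) =
        (ϱ * (-1 : K) ^ (∑ j : Fin (n + 1), ∑ i : Fin (n + 1),
            if 0 < (i : ℕ) ∧ (i : ℕ) < (j : ℕ) then deg i * deg j else 0)) •
          ten (fun i => deg (-i)) (fun i => star (deg (-i)) (a (-i))))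
    (hDf : ∀ (deg : Fin (n + 1) → ℕ) (a : ∀ i, A (deg i)),
      D (ten deg a) =
        ∑ i : Fin (n + 1),
          ((-1 : K) ^ (∑ j : Fin (n + 1), if (j : ℕ) < (i : ℕ) then deg j else 0)) •
            ten (Function.update deg i (deg i - 1))
              (updTuple deg a i (d (deg i) (a i)))) :
    D * r = r * D :=
  stmt6_general n ten hspan d hd0 star hdstar ϱ r D hrf hDf
end

section
/- Let (X, t, r, d, ∂̃) be a dihedral module with ∞-simplicial faces, and define d_0^k = Σ_{0 ≤ i_1 < ... < i_k ≤ n} (-1)^{i_1+...+i_k} ∂_(i_1,...,i_k) : X_{n,•} → X_{n-k,•+k-1} and R_n = (-1)^{n(n+1)/2} r_n. Then d_0^k ∘ R_n = R_{n-k} ∘ d_0^k for all k ≥ 1 and n ≥ 0. -/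
/-! The reflection `c ↦ (n - c_k, …, n - c_1)` permutes the strictly increasing faces, and
relation (1.3) turns the term of `c` in `d₀^k ∘ R_n` into the term of its reflection in
`R_{n-k} ∘ d₀^k`. The signs agree because the index sums of `c` and of its reflection add up to
`k n`, while `n(n+1)/2 ≡ (n-k)(n-k+1)/2 + k(k-1)/2 + k n (mod 2)`. -/

def reflectFace {k m : ℕ} (c : Fin k → Fin m) : Fin k → Fin m :=
  Fin.rev ∘ c ∘ Fin.rev

theorem reflectFace_involutive {k m : ℕ} : Function.Involutive (@reflectFace k m) := by
  intro c
  funext s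
  simp [reflectFace]

theorem StrictMono.reflectFace {k m : ℕ} {c : Fin k → Fin m} (hc : StrictMono c) :
    StrictMono (reflectFace c) :=
  Fin.rev_strictAnti.comp (hc.comp_strictAnti Fin.rev_strictAnti)

theorem val_reflectFace {k n : ℕ} (c : Fin k → Fin (n + 1)) (s : Fin k) :
    (reflectFace c s : ℕ) = n - c s.rev := by
  simp [reflectFace, Fin.val_rev]

theorem sum_val_reflectFace_add {k n : ℕ} (c : Fin k → Fin (n + 1)) :
    ∑ s, (reflectFace c s : ℕ) + ∑ s, (c s : ℕ) = k * n := by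
  rw [← Equiv.sum_comp Fin.revPerm, ← Finset.sum_add_distrib]
  have hval (s : Fin k) : (reflectFace c s.rev : ℕ) + c s = n := by
    have := (c s).isLt
    rw [val_reflectFace, Fin.rev_rev]
    omega
  simp [Fin.revPerm_apply, hval]

theorem even_triangle_sub_add {n k : ℕ} (hkn : k ≤ n) :
    Even ((n - k) * (n - k + 1) / 2 + k * (k - 1) / 2 + n * (n + 1) / 2 + k * n) := by
  obtain ⟨m, rfl⟩ := Nat.exists_eq_add_of_le hkn
  obtain ⟨a, ha⟩ := Nat.even_mul_succ_self m
  obtain ⟨b, hb⟩ := Nat.even_mul_pred_self k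
  have hsq : (k + m) * (k + m + 1) = m * (m + 1) + k * (k - 1) + 2 * (k * (m + 1)) := by
    rcases k with _ | j
    · simp
    · simp only [Nat.add_sub_cancel]; ring
  have hlin : k * (k + m) = k * (m + 1) + k * (k - 1) := by
    rcases k with _ | j
    · simp
    · simp only [Nat.add_sub_cancel]; ring
  rw [Nat.add_sub_cancel_left, hsq, hlin, ha, hb]
  exact ⟨a + b + b + k * (m + 1), by omega⟩

theorem LinearMap.finsetSum_comp {R M N P ι : Type*} [CommSemiring R] [AddCommMonoid M]
    [AddCommMonoid N] [AddCommMonoid P] [Module R M] [Module R N] [Module R P]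
    (s : Finset ι) (f : ι → N →ₗ[R] P) (g : M →ₗ[R] N) :
    (∑ i ∈ s, f i).comp g = ∑ i ∈ s, (f i).comp g :=
  map_sum (LinearMap.lcomp R P g) f s

theorem LinearMap.comp_finsetSum {R M N P ι : Type*} [CommSemiring R] [AddCommMonoid M]
    [AddCommMonoid N] [AddCommMonoid P] [Module R M] [Module R N] [Module R P]
    (s : Finset ι) (f : ι → M →ₗ[R] N) (g : N →ₗ[R] P) :
    g.comp (∑ i ∈ s, f i) = ∑ i ∈ s, g.comp (f i) :=
  map_sum (LinearMap.llcomp R M N P g) f s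

/-- In a dihedral module with ∞-simplicial faces, with
`d₀^k = ∑_{0≤i₁<⋯<i_k≤n} (-1)^{i₁+⋯+i_k} ∂_(i₁,…,i_k) : X_{n,•} → X_{n-k,•+k-1}` and
`R_n = (-1)^{n(n+1)/2} r_n`, one has `d₀^k ∘ R_n = R_{n-k} ∘ d₀^k` (`k ≥ 1`).
Here `F n k c` stands for the ∞-simplicial face `∂_(c 0, …, c (k-1))` (for strictly
increasing `c`), the internal grading being collapsed. -/
theorem stmt8 {K : Type*} [CommRing K] {X : ℕ → Type*}
    [∀ n, AddCommGroup (X n)] [∀ n, Module K (X n)]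
    (r : ∀ n, Module.End K (X n))
    (F : ∀ n k : ℕ, (Fin k → Fin (n + 1)) → (X n →ₗ[K] X (n - k)))
    (n k : ℕ) (hkn : k ≤ n)
    -- relation (1.3) : `∂_(i₁,…,i_k) r_n = (-1)^{k(k-1)/2} r_{n-k} ∂_(n-i_k,…,n-i₁)`
    (hrel : ∀ c : Fin k → Fin (n + 1), StrictMono c →
      (F n k c).comp (r n : X n →ₗ[K] X n) =
        ((-1 : K) ^ (k * (k - 1) / 2)) •
          ((r (n - k) : X (n - k) →ₗ[K] X (n - k)).comp
            (F n k (fun s => ⟨n - (c s.rev : ℕ), by omega⟩)))) :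
    (∑ c ∈ Finset.univ.filter (fun c : Fin k → Fin (n + 1) => StrictMono c),
        ((-1 : K) ^ (∑ s : Fin k, (c s : ℕ))) • F n k c).comp
      ((((-1 : K) ^ (n * (n + 1) / 2)) • r n : Module.End K (X n)) : X n →ₗ[K] X n) =
    ((((-1 : K) ^ ((n - k) * ((n - k) + 1) / 2)) • r (n - k) :
        Module.End K (X (n - k))) : X (n - k) →ₗ[K] X (n - k)).comp
      (∑ c ∈ Finset.univ.filter (fun c : Fin k → Fin (n + 1) => StrictMono c),
        ((-1 : K) ^ (∑ s : Fin k, (c s : ℕ))) • F n k c) := by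
  have hrel_reflect : ∀ c : Fin k → Fin (n + 1), StrictMono c →
      (F n k c).comp (r n : X n →ₗ[K] X n) =
        ((-1 : K) ^ (k * (k - 1) / 2)) •
          ((r (n - k) : X (n - k) →ₗ[K] X (n - k)).comp (F n k (reflectFace c))) := by
    intro c hc
    convert hrel c hc using 5 with s
    exact Fin.ext (val_reflectFace c s)
  rw [LinearMap.finsetSum_comp, LinearMap.comp_finsetSum]
  refine Finset.sum_nbij' reflectFace reflectFace ?_ ?_ (fun c _ => reflectFace_involutive c)
    (fun c _ => reflectFace_involutive c) ?_
  · simpa using fun c hc => hc.reflectFace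
  · simpa using fun c hc => hc.reflectFace
  intro c hc
  simp only [Finset.mem_filter, Finset.mem_univ, true_and] at hc
  simp only [LinearMap.smul_comp, LinearMap.comp_smul, hrel_reflect c hc, smul_smul]
  congr 1
  rw [← pow_add, ← pow_add, ← pow_add]
  refine neg_one_pow_congr (Nat.even_add.mp ?_)
  convert even_triangle_sub_add hkn using 1
  have := sum_val_reflectFace_add c
  omega
end

section
/- Let (C, b') be a chain complex of modules with a contracting homotopy s (i.e., b's + sb' = 1), and suppose C carries a degreewise action of Z/2 commuting with b' via an involution ϑ. Form the first-quadrant bicomplex Q with Q_{n,m} = C_n, vertical differential D' = ±(1 + (-1)^{m+1}ϑ) and horizontal differential -b'. Then the total complex Tot(Q) is acyclic: H_n(Tot Q) = 0 for all n ≥ 0. -/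
/-
Each row of `Q` is the complex `(C, -b')`, contracted by `-s`, so `Tot(Q)` with only its horizontal
differential `d₀` is contractible by a homotopy `h₀`. The vertical differential `δ` moves a column
index up by one, so `δ h₀` is nilpotent on each `Tot_k`, and the homological perturbation lemma
makes `h₀ (1 + δ h₀)⁻¹` a contracting homotopy for the total differential `d₀ + δ`.
-/

open scoped DirectSum

section

variable {K : Type*} [CommRing K] {C : ℕ → Type*}
  [∀ n, AddCommGroup (C n)] [∀ n, Module K (C n)]

/-- Transport of an element along an equality of degrees. -/
def castL (K : Type*) [CommRing K] {C : ℕ → Type*}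
    [∀ n, AddCommGroup (C n)] [∀ n, Module K (C n)] {p q : ℕ} (h : p = q) :
    C p →ₗ[K] C q := by subst h; exact LinearMap.id

/-- The differential `Tot(Q)_{k+1} → Tot(Q)_k` of the total complex of the bicomplex
`Q_{n,m} = C_n` whose column differentials are `(-1)^{n+1}(1 + (-1)^{m+1}ϑ)` and whose
row differentials are `-b'`. -/
noncomputable def dT (b : ∀ n : ℕ, C (n + 1) →ₗ[K] C n) (θ : ∀ n : ℕ, C n →ₗ[K] C n)
    (k : ℕ) : (⨁ i : Fin (k + 2), C i) →ₗ[K] (⨁ i : Fin (k + 1), C i) :=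
  DirectSum.toModule K (Fin (k + 2)) (⨁ i : Fin (k + 1), C i) (fun n =>
    (if h : (n : ℕ) ≤ k then
      (DirectSum.lof K (Fin (k + 1)) (fun i => C i) ⟨(n : ℕ), by omega⟩).comp
        (((-1 : K) ^ ((n : ℕ) + 1)) •
          (LinearMap.id + ((-1 : K) ^ ((k + 1 - (n : ℕ)) + 1)) • θ (n : ℕ)))
     else 0)
    +
    (if h : 0 < (n : ℕ) then
      (DirectSum.lof K (Fin (k + 1)) (fun i => C i) ⟨(n : ℕ) - 1, by have := n.isLt; omega⟩).comp
        ((-(b ((n : ℕ) - 1))).comp (castL K (show (n : ℕ) = ((n : ℕ) - 1) + 1 by omega)))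
     else 0))

section Perturbation

variable {R : Type*}

lemma exact_of_comp_add_comp_eq_id [Semiring R] {M N P : Type*} [AddCommMonoid M]
    [AddCommMonoid N] [AddCommMonoid P] [Module R M] [Module R N] [Module R P]
    {f : M →ₗ[R] N} {g : N →ₗ[R] P} (h : N →ₗ[R] M) (h' : P →ₗ[R] N) (hgf : g ∘ₗ f = 0)
    (hh : f ∘ₗ h + h' ∘ₗ g = LinearMap.id) : Function.Exact f g :=
  LinearMap.exact_of_comp_of_mem_range hgf fun y hy =>
    ⟨h y, by simpa [hy] using LinearMap.congr_fun hh y⟩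

variable [Ring R] {T : ℕ → Type*} [∀ k, AddCommGroup (T k)] [∀ k, Module R (T k)]
  (d₀ δ : ∀ k, T (k + 1) →ₗ[R] T k) (h₀ : ∀ k, T k →ₗ[R] T (k + 1))

noncomputable def perturbedHomotopy (k : ℕ) : T k →ₗ[R] T (k + 1) :=
  h₀ k ∘ₗ Ring.inverse (1 + δ k ∘ₗ h₀ k)

-- The two sides differ by `(δ d₀ + d₀ δ + δ²) h₀ = ((d₀ + δ)² - d₀²) h₀ = 0`.
lemma one_add_comp_comp_eq_comp_one_add (hd₀ : ∀ k, d₀ k ∘ₗ d₀ (k + 1) = 0)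
    (hd : ∀ k, (d₀ k + δ k) ∘ₗ (d₀ (k + 1) + δ (k + 1)) = 0)
    (hh₀ : ∀ k, d₀ (k + 1) ∘ₗ h₀ (k + 1) + h₀ k ∘ₗ d₀ k = LinearMap.id) (k : ℕ) :
    (1 + δ k ∘ₗ h₀ k) ∘ₗ d₀ k = (d₀ k + δ k) ∘ₗ (1 + δ (k + 1) ∘ₗ h₀ (k + 1)) := by
  have hδδ (y : T (k + 2)) : d₀ k (δ (k + 1) y) + δ k (δ (k + 1) y) = -δ k (d₀ (k + 1) y) := by
    have h := LinearMap.congr_fun (hd k) y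
    have h' := LinearMap.congr_fun (hd₀ k) y
    simp only [LinearMap.comp_apply, LinearMap.add_apply, map_add, LinearMap.zero_apply] at h h'
    rw [h'] at h
    linear_combination (norm := abel) h
  ext x
  have hx := congrArg (δ k) (LinearMap.congr_fun (hh₀ k) x)
  simp only [LinearMap.comp_apply, LinearMap.add_apply, LinearMap.id_apply, map_add] at hx
  simp only [LinearMap.comp_apply, LinearMap.add_apply, Module.End.one_apply, map_add, hδδ]
  rw [← hx]
  abel

variable {d₀ δ h₀}

lemma inverse_one_add_comp (k : ℕ) (hnil : IsNilpotent (δ k ∘ₗ h₀ k)) :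
    Ring.inverse (1 + δ k ∘ₗ h₀ k) ∘ₗ (1 + δ k ∘ₗ h₀ k) = LinearMap.id :=
  Ring.inverse_mul_cancel _ hnil.isUnit_one_add

lemma one_add_comp_inverse (k : ℕ) (hnil : IsNilpotent (δ k ∘ₗ h₀ k)) :
    (1 + δ k ∘ₗ h₀ k) ∘ₗ Ring.inverse (1 + δ k ∘ₗ h₀ k) = LinearMap.id :=
  Ring.mul_inverse_cancel _ hnil.isUnit_one_add

lemma comp_perturbedHomotopy_add_perturbedHomotopy_comp
    (hd₀ : ∀ k, d₀ k ∘ₗ d₀ (k + 1) = 0)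
    (hd : ∀ k, (d₀ k + δ k) ∘ₗ (d₀ (k + 1) + δ (k + 1)) = 0)
    (hh₀ : ∀ k, d₀ (k + 1) ∘ₗ h₀ (k + 1) + h₀ k ∘ₗ d₀ k = LinearMap.id)
    (hnil : ∀ k, IsNilpotent (δ k ∘ₗ h₀ k)) (k : ℕ) :
    (d₀ (k + 1) + δ (k + 1)) ∘ₗ perturbedHomotopy δ h₀ (k + 1) +
      perturbedHomotopy δ h₀ k ∘ₗ (d₀ k + δ k) = LinearMap.id := by
  set A := fun k => Ring.inverse (1 + δ k ∘ₗ h₀ k)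
  have hA : A k ∘ₗ (d₀ k + δ k) = d₀ k ∘ₗ A (k + 1) := calc
    A k ∘ₗ (d₀ k + δ k)
        = A k ∘ₗ (d₀ k + δ k) ∘ₗ (1 + δ (k + 1) ∘ₗ h₀ (k + 1)) ∘ₗ A (k + 1) := by
      rw [one_add_comp_inverse _ (hnil (k + 1)), LinearMap.comp_id]
    _ = (A k ∘ₗ (1 + δ k ∘ₗ h₀ k)) ∘ₗ d₀ k ∘ₗ A (k + 1) := by
      simp only [← LinearMap.comp_assoc, ← one_add_comp_comp_eq_comp_one_add d₀ δ h₀ hd₀ hd hh₀]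
    _ = d₀ k ∘ₗ A (k + 1) := by rw [inverse_one_add_comp _ (hnil k), LinearMap.id_comp]
  calc (d₀ (k + 1) + δ (k + 1)) ∘ₗ h₀ (k + 1) ∘ₗ A (k + 1) + (h₀ k ∘ₗ A k) ∘ₗ (d₀ k + δ k)
      = (d₀ (k + 1) ∘ₗ h₀ (k + 1) + h₀ k ∘ₗ d₀ k + δ (k + 1) ∘ₗ h₀ (k + 1)) ∘ₗ A (k + 1) := by
        rw [LinearMap.comp_assoc, hA]
        simp only [LinearMap.add_comp, LinearMap.comp_assoc]
        abel
    _ = LinearMap.id := by rw [hh₀, ← Module.End.one_eq_id]; exact one_add_comp_inverse _ (hnil _)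

lemma comp_perturbedHomotopy_zero (hh₀ : d₀ 0 ∘ₗ h₀ 0 = LinearMap.id)
    (hnil : IsNilpotent (δ 0 ∘ₗ h₀ 0)) :
    (d₀ 0 + δ 0) ∘ₗ perturbedHomotopy δ h₀ 0 = LinearMap.id := by
  rw [perturbedHomotopy, ← LinearMap.comp_assoc, LinearMap.add_comp, hh₀]
  exact one_add_comp_inverse _ hnil

theorem acyclic_of_perturbation (hd₀ : ∀ k, d₀ k ∘ₗ d₀ (k + 1) = 0)
    (hd : ∀ k, (d₀ k + δ k) ∘ₗ (d₀ (k + 1) + δ (k + 1)) = 0)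
    (hh₀ : ∀ k, d₀ (k + 1) ∘ₗ h₀ (k + 1) + h₀ k ∘ₗ d₀ k = LinearMap.id)
    (hh₀_zero : d₀ 0 ∘ₗ h₀ 0 = LinearMap.id) (hnil : ∀ k, IsNilpotent (δ k ∘ₗ h₀ k)) :
    Function.Surjective (d₀ 0 + δ 0) ∧ ∀ k, Function.Exact (d₀ (k + 1) + δ (k + 1)) (d₀ k + δ k) :=
  ⟨fun y => ⟨perturbedHomotopy δ h₀ 0 y,
      LinearMap.congr_fun (comp_perturbedHomotopy_zero hh₀_zero (hnil 0)) y⟩,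
    fun k => exact_of_comp_add_comp_eq_id _ _ (hd k)
      (comp_perturbedHomotopy_add_perturbedHomotopy_comp hd₀ hd hh₀ hnil k)⟩

end Perturbation

section Bicomplex

variable (b : ∀ n : ℕ, C (n + 1) →ₗ[K] C n) (s : ∀ n : ℕ, C n →ₗ[K] C (n + 1))
  (θ : ∀ n : ℕ, C n →ₗ[K] C n)

-- The inclusion of `C n` as column `n` of `Tot_k = ⨁_{n ≤ k} C n`, zero when `n > k`; this makes
-- the formulas on generators below hold for every `n`.
variable (K) in
def totIncl (k n : ℕ) : C n →ₗ[K] ⨁ i : Fin (k + 1), C i :=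
  if h : n < k + 1 then DirectSum.lof K (Fin (k + 1)) (fun i => C i) ⟨n, h⟩ else 0

lemma totIncl_of_lt {k n : ℕ} (h : n < k + 1) :
    totIncl K (C := C) k n = DirectSum.lof K (Fin (k + 1)) (fun i => C i) ⟨n, h⟩ :=
  dif_pos h

lemma totIncl_of_le {k n : ℕ} (h : k + 1 ≤ n) : totIncl K (C := C) k n = 0 :=
  dif_neg (by omega)

lemma tot_ext {M : Type*} [AddCommGroup M] [Module K M] {k : ℕ}
    {f g : (⨁ i : Fin (k + 1), C i) →ₗ[K] M}
    (h : ∀ n, f ∘ₗ totIncl K k n = g ∘ₗ totIncl K k n) : f = g :=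
  DirectSum.linearMap_ext K fun i => by simpa only [totIncl_of_lt i.isLt] using h i

lemma toModule_comp_totIncl {M : Type*} [AddCommGroup M] [Module K M] {k n : ℕ}
    (φ : ∀ i : Fin (k + 1), C i →ₗ[K] M) (h : n < k + 1) :
    DirectSum.toModule K (Fin (k + 1)) M φ ∘ₗ totIncl K k n = φ ⟨n, h⟩ := by
  rw [totIncl_of_lt h]
  exact LinearMap.ext fun x => by rw [LinearMap.comp_apply, DirectSum.toModule_lof]

-- The column differential `Q_{n,m} → Q_{n,m-1}` with `m = k + 1 - n`, as it appears in `dT b θ k`.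
def vertDiff (k n : ℕ) : C n →ₗ[K] C n :=
  ((-1 : K) ^ (n + 1)) • (LinearMap.id + ((-1 : K) ^ ((k + 1 - n) + 1)) • θ n)

lemma vertDiff_comp_vertDiff (hθ2 : ∀ n, θ n ∘ₗ θ n = LinearMap.id) {k n : ℕ} (hn : n ≤ k + 1) :
    vertDiff θ k n ∘ₗ vertDiff θ (k + 1) n = 0 := by
  have he : ((-1 : K) ^ (k + 1 - n + 1)) * (-1) ^ (k + 1 - n + 1) = 1 := by
    rw [← mul_pow]; norm_num
  rw [vertDiff, vertDiff, show k + 1 + 1 - n + 1 = k + 1 - n + 1 + 1 by omega,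
    pow_succ (-1 : K) (k + 1 - n + 1), mul_neg_one]
  simp only [LinearMap.smul_comp, LinearMap.comp_smul, LinearMap.add_comp, LinearMap.comp_add,
    LinearMap.comp_id, LinearMap.id_comp, hθ2, smul_smul]
  generalize (-1 : K) ^ (k + 1 - n + 1) = e at he ⊢
  match_scalars
  · linear_combination (-(-1 : K) ^ (n + 1) * (-1) ^ (n + 1)) * he
  · ring

lemma comp_vertDiff_eq_neg_vertDiff_comp (hθb : ∀ n, θ n ∘ₗ b n = b n ∘ₗ θ (n + 1)) (k n : ℕ) :
    b n ∘ₗ vertDiff θ (k + 1) (n + 1) = -(vertDiff θ k n ∘ₗ b n) := by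
  rw [vertDiff, vertDiff, show k + 1 + 1 - (n + 1) = k + 1 - n by omega]
  simp only [LinearMap.comp_smul, LinearMap.smul_comp, LinearMap.comp_add, LinearMap.add_comp,
    LinearMap.comp_id, LinearMap.id_comp, ← hθb, pow_succ (-1 : K) (n + 1), mul_neg_one]
  module

noncomputable def totVert (k : ℕ) : (⨁ i : Fin (k + 2), C i) →ₗ[K] ⨁ i : Fin (k + 1), C i :=
  DirectSum.toModule K _ _ fun i => totIncl K k i ∘ₗ vertDiff θ k i

noncomputable def totHoriz (k : ℕ) : (⨁ i : Fin (k + 2), C i) →ₗ[K] ⨁ i : Fin (k + 1), C i :=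
  DirectSum.toModule K _ _ fun i => Fin.cases 0 (fun j => totIncl K k j ∘ₗ (-b j)) i

noncomputable def totShift (k : ℕ) : (⨁ i : Fin (k + 1), C i) →ₗ[K] ⨁ i : Fin (k + 2), C i :=
  DirectSum.toModule K _ _ fun i => totIncl K (k + 1) (i + 1) ∘ₗ (-s i)

lemma totVert_comp_totIncl (k n : ℕ) :
    totVert θ k ∘ₗ totIncl K (k + 1) n = totIncl K k n ∘ₗ vertDiff θ k n := by
  by_cases h : n < k + 2
  · exact toModule_comp_totIncl _ h
  · rw [totIncl_of_le (by omega), totIncl_of_le (by omega)]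
    rfl

lemma totHoriz_comp_totIncl_zero (k : ℕ) : totHoriz b k ∘ₗ totIncl K (k + 1) 0 = 0 :=
  toModule_comp_totIncl _ (Nat.succ_pos _)

lemma totHoriz_comp_totIncl_succ (k n : ℕ) :
    totHoriz b k ∘ₗ totIncl K (k + 1) (n + 1) = totIncl K k n ∘ₗ (-b n) := by
  by_cases h : n + 1 < k + 2
  · exact toModule_comp_totIncl _ h
  · rw [totIncl_of_le (by omega), totIncl_of_le (by omega)]
    rfl

lemma totShift_comp_totIncl (k n : ℕ) :
    totShift s k ∘ₗ totIncl K k n = totIncl K (k + 1) (n + 1) ∘ₗ (-s n) := by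
  by_cases h : n < k + 1
  · exact toModule_comp_totIncl _ h
  · rw [totIncl_of_le (by omega), totIncl_of_le (by omega)]
    rfl

lemma dT_eq_totHoriz_add_totVert (k : ℕ) : dT b θ k = totHoriz b k + totVert θ k := by
  refine tot_ext fun n => ?_
  rw [LinearMap.add_comp, totVert_comp_totIncl]
  by_cases hn : n < k + 2
  · rcases n with _ | n
    · rw [totHoriz_comp_totIncl_zero, totIncl_of_lt (Nat.succ_pos k), dT,
        toModule_comp_totIncl _ hn, dif_pos (Nat.zero_le k), dif_neg (lt_irrefl 0)]
      simp only [zero_add, add_zero]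
      rfl
    · rw [totHoriz_comp_totIncl_succ, totIncl_of_lt (show n < k + 1 by omega)]
      by_cases h : n + 1 ≤ k
      · rw [totIncl_of_lt (Nat.succ_lt_succ h), dT, toModule_comp_totIncl _ hn,
          dif_pos (Nat.succ_pos n), dif_pos h]
        exact add_comm _ _
      · rw [totIncl_of_le (show k + 1 ≤ n + 1 by omega), dT, toModule_comp_totIncl _ hn,
          dif_pos (Nat.succ_pos n), dif_neg h]
        simp only [zero_add, LinearMap.zero_comp, add_zero]
        rfl
  · simp only [totIncl_of_le (show k + 2 ≤ n by omega), totIncl_of_le (show k + 1 ≤ n by omega),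
      LinearMap.comp_zero, LinearMap.zero_comp, add_zero]

lemma totVert_comp_totVert (hθ2 : ∀ n, θ n ∘ₗ θ n = LinearMap.id) (k : ℕ) :
    totVert θ k ∘ₗ totVert θ (k + 1) = 0 := by
  refine tot_ext fun n => ?_
  rw [LinearMap.comp_assoc, totVert_comp_totIncl, ← LinearMap.comp_assoc, totVert_comp_totIncl,
    LinearMap.comp_assoc, LinearMap.zero_comp]
  by_cases hn : n ≤ k + 1
  · rw [vertDiff_comp_vertDiff θ hθ2 hn, LinearMap.comp_zero]
  · rw [totIncl_of_le (by omega), LinearMap.zero_comp]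

lemma totHoriz_comp_totHoriz (hb2 : ∀ n, b n ∘ₗ b (n + 1) = 0) (k : ℕ) :
    totHoriz b k ∘ₗ totHoriz b (k + 1) = 0 := by
  refine tot_ext fun n => ?_
  rw [LinearMap.comp_assoc, LinearMap.zero_comp]
  rcases n with _ | _ | n
  · rw [totHoriz_comp_totIncl_zero, LinearMap.comp_zero]
  · rw [totHoriz_comp_totIncl_succ, ← LinearMap.comp_assoc, totHoriz_comp_totIncl_zero,
      LinearMap.zero_comp]
  · rw [totHoriz_comp_totIncl_succ, ← LinearMap.comp_assoc, totHoriz_comp_totIncl_succ,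
      LinearMap.comp_assoc]
    simp only [LinearMap.neg_comp, LinearMap.comp_neg, neg_neg, hb2, LinearMap.comp_zero]

lemma totHoriz_comp_totVert_add_totVert_comp_totHoriz
    (hθb : ∀ n, θ n ∘ₗ b n = b n ∘ₗ θ (n + 1)) (k : ℕ) :
    totHoriz b k ∘ₗ totVert θ (k + 1) + totVert θ k ∘ₗ totHoriz b (k + 1) = 0 := by
  refine tot_ext fun n => ?_
  rw [LinearMap.add_comp, LinearMap.comp_assoc, LinearMap.comp_assoc, totVert_comp_totIncl,
    LinearMap.zero_comp, ← LinearMap.comp_assoc]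
  rcases n with _ | n
  · rw [totHoriz_comp_totIncl_zero, totHoriz_comp_totIncl_zero, LinearMap.zero_comp,
      LinearMap.comp_zero, add_zero]
  · rw [totHoriz_comp_totIncl_succ, totHoriz_comp_totIncl_succ, ← LinearMap.comp_assoc,
      totVert_comp_totIncl, LinearMap.comp_assoc, LinearMap.comp_assoc, ← LinearMap.comp_add,
      LinearMap.neg_comp, comp_vertDiff_eq_neg_vertDiff_comp b θ hθb, neg_neg,
      LinearMap.comp_neg, add_neg_cancel, LinearMap.comp_zero]

lemma totHoriz_add_totVert_comp_totHoriz_add_totVert (hb2 : ∀ n, b n ∘ₗ b (n + 1) = 0)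
    (hθ2 : ∀ n, θ n ∘ₗ θ n = LinearMap.id) (hθb : ∀ n, θ n ∘ₗ b n = b n ∘ₗ θ (n + 1)) (k : ℕ) :
    (totHoriz b k + totVert θ k) ∘ₗ (totHoriz b (k + 1) + totVert θ (k + 1)) = 0 := by
  simp only [LinearMap.add_comp, LinearMap.comp_add, totHoriz_comp_totHoriz b hb2,
    totVert_comp_totVert θ hθ2, zero_add, add_zero]
  exact (add_comm _ _).trans (totHoriz_comp_totVert_add_totVert_comp_totHoriz b θ hθb k)

lemma totHoriz_comp_totShift_add_totShift_comp_totHoriz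
    (hcontr : ∀ n, b (n + 1) ∘ₗ s (n + 1) + s n ∘ₗ b n = LinearMap.id)
    (hcontr0 : b 0 ∘ₗ s 0 = LinearMap.id) (k : ℕ) :
    totHoriz b (k + 1) ∘ₗ totShift s (k + 1) + totShift s k ∘ₗ totHoriz b k = LinearMap.id := by
  refine tot_ext fun n => ?_
  rw [LinearMap.add_comp, LinearMap.comp_assoc, LinearMap.comp_assoc, totShift_comp_totIncl,
    LinearMap.id_comp, ← LinearMap.comp_assoc, totHoriz_comp_totIncl_succ]
  rcases n with _ | n
  · rw [totHoriz_comp_totIncl_zero, LinearMap.comp_zero, add_zero, LinearMap.comp_assoc]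
    simp only [LinearMap.neg_comp, LinearMap.comp_neg, neg_neg, hcontr0, LinearMap.comp_id]
  · rw [totHoriz_comp_totIncl_succ, ← LinearMap.comp_assoc, totShift_comp_totIncl,
      LinearMap.comp_assoc, LinearMap.comp_assoc, ← LinearMap.comp_add]
    simp only [LinearMap.neg_comp, LinearMap.comp_neg, neg_neg, hcontr, LinearMap.comp_id]

lemma totHoriz_comp_totShift_zero (hcontr0 : b 0 ∘ₗ s 0 = LinearMap.id) :
    totHoriz b 0 ∘ₗ totShift s 0 = LinearMap.id := by
  refine tot_ext fun n => ?_
  rw [LinearMap.comp_assoc, totShift_comp_totIncl, LinearMap.id_comp]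
  rcases n with _ | n
  · rw [← LinearMap.comp_assoc, totHoriz_comp_totIncl_succ, LinearMap.comp_assoc]
    simp only [LinearMap.neg_comp, LinearMap.comp_neg, neg_neg, hcontr0, LinearMap.comp_id]
  · simp only [totIncl_of_le (show 0 + 1 ≤ n + 1 by omega),
      totIncl_of_le (show 1 + 1 ≤ n + 1 + 1 by omega), LinearMap.zero_comp, LinearMap.comp_zero]

lemma totVert_comp_totShift_pow_comp_totIncl {k n j : ℕ} (h : k < n + j) :
    ((totVert θ k ∘ₗ totShift s k) ^ j) ∘ₗ totIncl K k n = 0 := by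
  induction j generalizing n with
  | zero => rw [pow_zero, Module.End.one_eq_id, LinearMap.id_comp, totIncl_of_le (by omega)]
  | succ j ih =>
    rw [pow_succ, Module.End.mul_eq_comp, LinearMap.comp_assoc, LinearMap.comp_assoc,
      totShift_comp_totIncl, ← LinearMap.comp_assoc (-s n) (totIncl K (k + 1) (n + 1)),
      totVert_comp_totIncl, ← LinearMap.comp_assoc, ← LinearMap.comp_assoc, ih (by omega),
      LinearMap.zero_comp, LinearMap.zero_comp]

lemma isNilpotent_totVert_comp_totShift (k : ℕ) : IsNilpotent (totVert θ k ∘ₗ totShift s k) :=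
  ⟨k + 1, tot_ext fun n => by
    rw [totVert_comp_totShift_pow_comp_totIncl s θ (by omega), LinearMap.zero_comp]⟩

end Bicomplex

/-- If `(C, b')` is a chain complex with a contracting homotopy `s`
(`b's + sb' = 1`) and a degreewise involution `ϑ` commuting with `b'`, then the total
complex of the first-quadrant bicomplex `Q` with `Q_{n,m} = C_n`, vertical differentials
`±(1 + (-1)^{m+1}ϑ)` and horizontal differentials `-b'` is acyclic:  `H_n(Tot Q) = 0`
for all `n ≥ 0` (exactness in every positive degree, and surjectivity of
`Tot(Q)_1 → Tot(Q)_0` in degree zero). -/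
theorem stmt15 (b : ∀ n : ℕ, C (n + 1) →ₗ[K] C n) (s : ∀ n : ℕ, C n →ₗ[K] C (n + 1))
    (θ : ∀ n : ℕ, C n →ₗ[K] C n)
    (hb2 : ∀ n, (b n).comp (b (n + 1)) = 0)
    (hθ2 : ∀ n, (θ n).comp (θ n) = LinearMap.id)
    (hθb : ∀ n, (θ n).comp (b n) = (b n).comp (θ (n + 1)))
    (hcontr : ∀ n, (b (n + 1)).comp (s (n + 1)) + (s n).comp (b n) = LinearMap.id)
    (hcontr0 : (b 0).comp (s 0) = LinearMap.id) :
    Function.Surjective (dT b θ 0) ∧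
    ∀ k : ℕ, Function.Exact (dT b θ (k + 1)) (dT b θ k) := by
  simp only [dT_eq_totHoriz_add_totVert]
  exact acyclic_of_perturbation (totHoriz_comp_totHoriz b hb2)
    (totHoriz_add_totVert_comp_totHoriz_add_totVert b θ hb2 hθ2 hθb)
    (totHoriz_comp_totShift_add_totShift_comp_totHoriz b s hcontr hcontr0)
    (totHoriz_comp_totShift_zero b s hcontr0) (isNilpotent_totVert_comp_totShift s θ)

end
end
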